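/- arXiv:2603.17750 — 2 statements merged into one kernel-verified Lean document; each statement's English description precedes it below -/
import Mathlib

section
/- Let E, Ẽ, F be standard Borel spaces. Let X ∼ μ on E, let X̃ be generated from X by a Markov kernel R : E → Ẽ, and let X_t be generated from X by a Markov kernel P : E → F, with X_t and X̃ conditionally independent given X. Let π(·|x̃) be a regular conditional distribution of X given X̃ = x̃, and define the posterior-predictive kernel P̄ : Ẽ → F by P̄(x̃) = ∫ P(x) dπ(x|x̃). Then for every Markov kernel Q : Ẽ → F, E[KL(P(X) ‖ Q(X̃))] = E[KL(P(X) ‖ P̄(X̃))] + E[KL(P̄(X̃) ‖ Q(X̃))], where expectations are over the joint law of (X, X̃); consequently the infimum over Q of E[KL(P(X) ‖ Q(X̃))] equals E[KL(P(X) ‖ P̄(X̃))] and is attained at Q = P̄. -/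
/-!
Disintegrating the joint law of `(X, X̃)` along `X̃` by `π` reduces the identity to a single `x̃`:
for probability measures `m = π x̃` on `E` and `ρ = Q x̃` on `F`,
`∫ KL(P x ‖ ρ) dm = ∫ KL(P x ‖ P ∘ m) dm + KL(P ∘ m ‖ ρ)`.
Both sides equal `KL(m ⊗ P ‖ m ⊗ ρ)` by the chain rule: decomposing along `X` gives the left
side; decomposing along `X_t`, where `m ⊗ P` disintegrates into the marginal `P ∘ m` followed by
the Bayesian posterior `P†m`, gives the right side.
-/

open MeasureTheory ProbabilityTheory
open scoped ENNReal

open Classical in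
/-- Kullback–Leibler divergence `KL(ν ‖ ρ) ∈ [0, ∞]`: equal to `∫ log (dν/dρ) dν` when
`ν ≪ ρ` and this integral exists, and `+∞` otherwise. -/
noncomputable def klDiv {α : Type*} [MeasurableSpace α] (ν ρ : Measure α) : ℝ≥0∞ :=
  if ν ≪ ρ ∧ Integrable (llr ν ρ) ν
  then ENNReal.ofReal (∫ x, llr ν ρ x ∂ν)
  else ⊤

/-- Mathlib's divergence carries the correction `ρ.real univ - ν.real univ`, which vanishes
for probability measures. -/
lemma klDiv_eq_informationTheory_klDiv {α : Type*} [MeasurableSpace α] (ν ρ : Measure α)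
    [IsProbabilityMeasure ν] [IsProbabilityMeasure ρ] :
    klDiv ν ρ = InformationTheory.klDiv ν ρ := by
  rw [klDiv, InformationTheory.klDiv_def]
  simp

namespace ProbabilityTheory

variable {α β : Type*} [MeasurableSpace α] [MeasurableSpace β]
  [MeasurableSpace.CountableOrCountablyGenerated α β] {κ η : Kernel α β}
  [IsFiniteKernel κ] [IsFiniteKernel η]

lemma rnDeriv_measure_compProd_right (μ : Measure α) [IsFiniteMeasure μ]
    (h : ∀ᵐ a ∂μ, κ a ≪ η a) :
    (μ ⊗ₘ κ).rnDeriv (μ ⊗ₘ η) =ᵐ[μ ⊗ₘ η] fun p => κ.rnDeriv η p.1 p.2 := by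
  have hκ : μ ⊗ₘ κ = (μ ⊗ₘ η).withDensity fun p => κ.rnDeriv η p.1 p.2 := by
    rw [← Measure.compProd_withDensity (Kernel.measurable_rnDeriv κ η)]
    refine Measure.compProd_congr ?_
    filter_upwards [h] with a ha using (Kernel.withDensity_rnDeriv_eq ha).symm
  rw [hκ]
  exact Measure.rnDeriv_withDensity _ (Kernel.measurable_rnDeriv κ η)

end ProbabilityTheory

namespace InformationTheory

lemma klDiv_map_measurableEquiv {α β : Type*} [MeasurableSpace α] [MeasurableSpace β]
    (μ ν : Measure α) [IsFiniteMeasure μ] [IsFiniteMeasure ν] (e : α ≃ᵐ β) :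
    klDiv (μ.map e) (ν.map e) = klDiv μ ν := by
  refine le_antisymm (klDiv_map_le μ ν e.measurable) ?_
  calc klDiv μ ν = klDiv ((μ.map e).map e.symm) ((ν.map e).map e.symm) := by
        rw [MeasurableEquiv.map_symm_map, MeasurableEquiv.map_symm_map]
    _ ≤ klDiv (μ.map e) (ν.map e) := klDiv_map_le _ _ e.symm.measurable

section Kernel

variable {α β : Type*} [MeasurableSpace α] [MeasurableSpace β]
  [MeasurableSpace.CountableOrCountablyGenerated α β] {κ η : Kernel α β}

variable (κ η) in
lemma measurable_ofReal_klFun_rnDeriv :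
    Measurable fun p : α × β => ENNReal.ofReal (klFun (κ.rnDeriv η p.1 p.2).toReal) :=
  (measurable_klFun.comp (Kernel.measurable_rnDeriv κ η).ennreal_toReal).ennreal_ofReal

variable [IsFiniteKernel κ] [IsFiniteKernel η]

lemma klDiv_apply_eq_lintegral_klFun_rnDeriv {a : α} (h : κ a ≪ η a) :
    klDiv (κ a) (η a) = ∫⁻ y, ENNReal.ofReal (klFun (κ.rnDeriv η a y).toReal) ∂η a := by
  rw [klDiv_eq_lintegral_klFun_of_ac h]
  refine lintegral_congr_ae ?_
  filter_upwards [Kernel.rnDeriv_eq_rnDeriv_measure (κ := κ) (η := η) (a := a)] with y hy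
  rw [hy]

variable (κ η) in
lemma measurable_klDiv_apply : Measurable fun a => klDiv (κ a) (η a) := by
  classical
  have h : (fun a => klDiv (κ a) (η a)) = fun a => if κ a ≪ η a
      then ∫⁻ y, ENNReal.ofReal (klFun (κ.rnDeriv η a y).toReal) ∂η a else ∞ := by
    ext a
    split_ifs with ha
    exacts [klDiv_apply_eq_lintegral_klFun_rnDeriv ha, klDiv_of_not_ac ha]
  rw [h]
  refine Measurable.ite (Kernel.measurableSet_absolutelyContinuous κ η) ?_ measurable_const
  exact (measurable_ofReal_klFun_rnDeriv κ η).lintegral_kernel_prod_right'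

variable (κ η) in
lemma klDiv_compProd_right (μ : Measure α) [IsFiniteMeasure μ] :
    klDiv (μ ⊗ₘ κ) (μ ⊗ₘ η) = ∫⁻ a, klDiv (κ a) (η a) ∂μ := by
  by_cases hac : ∀ᵐ a ∂μ, κ a ≪ η a
  · rw [klDiv_eq_lintegral_klFun_of_ac (Measure.absolutelyContinuous_compProd_right_iff.mpr hac),
      lintegral_congr_ae ((rnDeriv_measure_compProd_right μ hac).mono fun p hp => by rw [hp]),
      Measure.lintegral_compProd (measurable_ofReal_klFun_rnDeriv κ η)]
    refine lintegral_congr_ae ?_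
    filter_upwards [hac] with a ha using (klDiv_apply_eq_lintegral_klFun_rnDeriv ha).symm
  · rw [klDiv_of_not_ac (by rwa [Measure.absolutelyContinuous_compProd_right_iff]), eq_comm]
    by_contra hfin
    refine hac ?_
    filter_upwards [ae_lt_top (measurable_klDiv_apply κ η) hfin] with a ha
    exact (klDiv_ne_top_iff.mp ha.ne).1

end Kernel

section Posterior

variable {E F : Type*} [MeasurableSpace E] [StandardBorelSpace E] [MeasurableSpace F]

lemma klDiv_compProd_const_eq_klDiv_compProd_posterior [Nonempty E]
    (m : Measure E) [IsProbabilityMeasure m]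
    (P : Kernel E F) [IsMarkovKernel P] (ρ : Measure F) [IsProbabilityMeasure ρ] :
    klDiv (m ⊗ₘ P) (m ⊗ₘ Kernel.const E ρ)
      = klDiv ((P ∘ₘ m) ⊗ₘ P†m) (ρ ⊗ₘ Kernel.const F m) := by
  rw [compProd_posterior_eq_map_swap, Measure.compProd_const, Measure.compProd_const,
    ← Measure.prod_swap (μ := m) (ν := ρ)]
  exact (klDiv_map_measurableEquiv (m ⊗ₘ P) (m.prod ρ) MeasurableEquiv.prodComm).symm

theorem lintegral_klDiv_eq_add [MeasurableSpace.CountablyGenerated F]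
    (m : Measure E) [IsProbabilityMeasure m]
    (P : Kernel E F) [IsMarkovKernel P] (ρ : Measure F) [IsProbabilityMeasure ρ] :
    ∫⁻ x, klDiv (P x) ρ ∂m = ∫⁻ x, klDiv (P x) (P ∘ₘ m) ∂m + klDiv (P ∘ₘ m) ρ := by
  have : Nonempty E := nonempty_of_isProbabilityMeasure m
  calc ∫⁻ x, klDiv (P x) ρ ∂m
      = klDiv ((P ∘ₘ m) ⊗ₘ P†m) (ρ ⊗ₘ Kernel.const F m) := by
        rw [← klDiv_compProd_const_eq_klDiv_compProd_posterior, klDiv_compProd_right]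
        simp
    _ = klDiv (P ∘ₘ m) ρ + klDiv ((P ∘ₘ m) ⊗ₘ P†m) ((P ∘ₘ m) ⊗ₘ Kernel.const F m) :=
        klDiv_compProd_eq_add _ _ _ _
    _ = ∫⁻ x, klDiv (P x) (P ∘ₘ m) ∂m + klDiv (P ∘ₘ m) ρ := by
        rw [← klDiv_compProd_const_eq_klDiv_compProd_posterior, klDiv_compProd_right, add_comm]
        simp

end Posterior

end InformationTheory

lemma lintegral_eq_lintegral_lintegral_of_map_swap_eq_compProd {α β : Type*}
    [MeasurableSpace α] [MeasurableSpace β] {ν : Measure (α × β)} [SFinite ν]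
    {π : Kernel β α} [IsSFiniteKernel π] (hπ : ν.map Prod.swap = ν.snd ⊗ₘ π)
    {f : α × β → ℝ≥0∞} (hf : Measurable f) :
    ∫⁻ z, f z ∂ν = ∫⁻ b, ∫⁻ a, f (a, b) ∂π b ∂ν.snd := by
  have hf' : Measurable fun w : β × α => f w.swap := hf.comp measurable_swap
  calc ∫⁻ z, f z ∂ν = ∫⁻ w, f w.swap ∂(ν.map Prod.swap) := by
        rw [lintegral_map hf' measurable_swap]
        simp
    _ = ∫⁻ b, ∫⁻ a, f (a, b) ∂π b ∂ν.snd := by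
        rw [hπ]
        exact Measure.lintegral_compProd hf'

theorem conditional_kl_risk_pythagorean_general
    {E E' F : Type*} [MeasurableSpace E] [StandardBorelSpace E]
    [MeasurableSpace E']
    [MeasurableSpace F] [StandardBorelSpace F]
    (μ : Measure E)
    (R : Kernel E E')
    (P : Kernel E F) [IsMarkovKernel P]
    (π : Kernel E' E) [IsMarkovKernel π]
    -- `π` is a regular conditional distribution of `X` given `X̃`
    (hπ : (μ ⊗ₘ R).map Prod.swap = ((μ ⊗ₘ R).snd) ⊗ₘ π) :
    (∀ Q : Kernel E' F, IsMarkovKernel Q →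
      ∫⁻ z, klDiv (P z.1) (Q z.2) ∂(μ ⊗ₘ R)
        = (∫⁻ z, klDiv (P z.1) ((P ∘ₖ π) z.2) ∂(μ ⊗ₘ R))
          + ∫⁻ z, klDiv ((P ∘ₖ π) z.2) (Q z.2) ∂(μ ⊗ₘ R))
    ∧ (⨅ (Q : Kernel E' F) (_ : IsMarkovKernel Q),
          ∫⁻ z, klDiv (P z.1) (Q z.2) ∂(μ ⊗ₘ R))
        = ∫⁻ z, klDiv (P z.1) ((P ∘ₖ π) z.2) ∂(μ ⊗ₘ R) := by
  have hrisk : ∀ Q : Kernel E' F, IsMarkovKernel Q → ∫⁻ z, klDiv (P z.1) (Q z.2) ∂(μ ⊗ₘ R)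
      = ∫⁻ b, ∫⁻ x, InformationTheory.klDiv (P x) (Q b) ∂π b ∂(μ ⊗ₘ R).snd := by
    intro Q _
    simp only [klDiv_eq_informationTheory_klDiv]
    exact lintegral_eq_lintegral_lintegral_of_map_swap_eq_compProd hπ
      (InformationTheory.measurable_klDiv_apply (P.prodMkRight E') (Q.prodMkLeft E))
  have key : ∀ Q : Kernel E' F, IsMarkovKernel Q →
      ∫⁻ z, klDiv (P z.1) (Q z.2) ∂(μ ⊗ₘ R)
        = (∫⁻ z, klDiv (P z.1) ((P ∘ₖ π) z.2) ∂(μ ⊗ₘ R))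
          + ∫⁻ z, klDiv ((P ∘ₖ π) z.2) (Q z.2) ∂(μ ⊗ₘ R) := by
    intro Q hQ
    have hmeas := InformationTheory.measurable_klDiv_apply (P ∘ₖ π) Q
    have hgap : ∫⁻ z, klDiv ((P ∘ₖ π) z.2) (Q z.2) ∂(μ ⊗ₘ R)
        = ∫⁻ b, InformationTheory.klDiv ((P ∘ₖ π) b) (Q b) ∂(μ ⊗ₘ R).snd := by
      simp only [klDiv_eq_informationTheory_klDiv]
      exact (lintegral_map hmeas measurable_snd).symm
    rw [hrisk Q hQ, hrisk (P ∘ₖ π) inferInstance, hgap, ← lintegral_add_right _ hmeas]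
    refine lintegral_congr fun b => ?_
    rw [Kernel.comp_apply]
    exact InformationTheory.lintegral_klDiv_eq_add (π b) P (Q b)
  refine ⟨key, le_antisymm (iInf₂_le (P ∘ₖ π) (inferInstance : IsMarkovKernel (P ∘ₖ π)))
    (le_iInf₂ fun Q hQ => ?_)⟩
  rw [key Q hQ]
  exact le_self_add

/-- **Pythagorean decomposition of the conditional KL risk (Corollary C.4).**
`X ∼ μ` on `E`, `X̃` is generated from `X` by the Markov kernel `R : E → Ẽ` (so the
joint law of `(X, X̃)` is `μ ⊗ₘ R`), and `X_t` is generated from `X` by the Markov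
kernel `P : E → F`, conditionally independently of `X̃` given `X`. If `π` is a regular
conditional distribution of `X` given `X̃` (i.e. the swapped joint law disintegrates as
`μ̃ ⊗ₘ π` where `μ̃` is the law of `X̃`), and `P̄ = P ∘ₖ π` is the posterior-predictive
kernel `P̄(x̃) = ∫ P(x) dπ(x|x̃)`, then for every Markov kernel `Q : Ẽ → F`,
`E[KL(P(X) ‖ Q(X̃))] = E[KL(P(X) ‖ P̄(X̃))] + E[KL(P̄(X̃) ‖ Q(X̃))]`;
consequently the infimum over `Q` of the left side equals `E[KL(P(X) ‖ P̄(X̃))]` and is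
attained at `Q = P̄`. -/
theorem conditional_kl_risk_pythagorean
    {E E' F : Type*} [MeasurableSpace E] [StandardBorelSpace E]
    [MeasurableSpace E'] [StandardBorelSpace E']
    [MeasurableSpace F] [StandardBorelSpace F]
    (μ : Measure E) [IsProbabilityMeasure μ]
    (R : Kernel E E') [IsMarkovKernel R]
    (P : Kernel E F) [IsMarkovKernel P]
    (π : Kernel E' E) [IsMarkovKernel π]
    -- `π` is a regular conditional distribution of `X` given `X̃`
    (hπ : (μ ⊗ₘ R).map Prod.swap = ((μ ⊗ₘ R).snd) ⊗ₘ π) :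
    (∀ Q : Kernel E' F, IsMarkovKernel Q →
      ∫⁻ z, klDiv (P z.1) (Q z.2) ∂(μ ⊗ₘ R)
        = (∫⁻ z, klDiv (P z.1) ((P ∘ₖ π) z.2) ∂(μ ⊗ₘ R))
          + ∫⁻ z, klDiv ((P ∘ₖ π) z.2) (Q z.2) ∂(μ ⊗ₘ R))
    ∧ (⨅ (Q : Kernel E' F) (_ : IsMarkovKernel Q),
          ∫⁻ z, klDiv (P z.1) (Q z.2) ∂(μ ⊗ₘ R))
        = ∫⁻ z, klDiv (P z.1) ((P ∘ₖ π) z.2) ∂(μ ⊗ₘ R) :=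
  conditional_kl_risk_pythagorean_general μ R P π hπ
end

section
/- Let E and F be measurable spaces, κ_1, …, κ_m Markov kernels from E to E, and η_1, …, η_k Markov kernels from F to F. Lift each κ_i to the kernel on E × F acting as κ_i on the first coordinate and the identity (Dirac) on the second, and each η_j to the kernel acting as η_j on the second coordinate and the identity on the first. Then for every interleaving of the sequence κ_1, …, κ_m with the sequence η_1, …, η_k that preserves the internal order of each sequence, the composition of the lifted kernels along the interleaving is the same kernel on E × F, namely the kernel sending (x, y) to (κ_m ∘ ⋯ ∘ κ_1)(x) ⊗ (η_k ∘ ⋯ ∘ η_1)(y). In particular, the joint law of the endpoints of two independently-noised coordinates depends only on the total amount of noising applied to each coordinate and not on the order in which the coordinatewise noising steps are interleaved. -/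
open MeasureTheory ProbabilityTheory

/-- `IsInterleaving as bs cs` says that `cs` is an interleaving (shuffle) of the two
sequences `as` and `bs`: it merges them into one sequence while preserving the internal
order of each. -/
inductive IsInterleaving {A : Type*} : List A → List A → List A → Prop
  | nil : IsInterleaving ([] : List A) ([] : List A) ([] : List A)
  | left {a : A} {as bs cs : List A} :
      IsInterleaving as bs cs → IsInterleaving (a :: as) bs (a :: cs)
  | right {b : A} {as bs cs : List A} :
      IsInterleaving as bs cs → IsInterleaving as (b :: bs) (b :: cs)

/-- Lift a kernel `κ : E → E` to a kernel on `E × F` acting as `κ` on the first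
coordinate and as the identity (Dirac) on the second: `(x, y) ↦ κ(x) ⊗ δ_y`. -/
noncomputable def liftFst {E F : Type*} [MeasurableSpace E] [MeasurableSpace F]
    (κ : Kernel E E) : Kernel (E × F) (E × F) :=
  (Kernel.prodMkRight F κ) ×ₖ (Kernel.deterministic Prod.snd measurable_snd)

/-- Lift a kernel `η : F → F` to a kernel on `E × F` acting as `η` on the second
coordinate and as the identity (Dirac) on the first: `(x, y) ↦ δ_x ⊗ η(y)`. -/
noncomputable def liftSnd {E F : Type*} [MeasurableSpace E] [MeasurableSpace F]
    (η : Kernel F F) : Kernel (E × F) (E × F) :=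
  (Kernel.deterministic Prod.fst measurable_fst) ×ₖ (Kernel.prodMkLeft E η)

/-- Sequential composition of a list of kernels, in application order: the head of the
list is applied first. -/
noncomputable def compList {X : Type*} [MeasurableSpace X] :
    List (Kernel X X) → Kernel X X
  | [] => Kernel.id
  | k :: ks => compList ks ∘ₖ k

/-!
Lifted to `E × F`, a kernel acting on the first coordinate is the parallel composition
`κ ∥ₖ id`, and one acting on the second is `id ∥ₖ η`. Parallel composition is functorial,
`(κ ∥ₖ η) ∘ₖ (κ' ∥ₖ η') = (κ ∘ₖ κ') ∥ₖ (η ∘ₖ η')`, so by induction on the interleaving the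
composite of the lifted kernels is `(κ_m ∘ₖ ⋯ ∘ₖ κ_1) ∥ₖ (η_k ∘ₖ ⋯ ∘ₖ η_1)`, whatever the
order in which the two sequences were merged.
-/

section

open Kernel

variable {E F : Type*} [MeasurableSpace E] [MeasurableSpace F]

lemma liftFst_eq_parallelComp_id (κ : Kernel E E) [IsSFiniteKernel κ] :
    liftFst (F := F) κ = κ ∥ₖ Kernel.id := by
  ext z : 1
  rw [liftFst, prod_apply, parallelComp_apply, prodMkRight_apply, deterministic_apply,
    id_apply]

lemma liftSnd_eq_id_parallelComp (η : Kernel F F) [IsSFiniteKernel η] :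
    liftSnd (E := E) η = Kernel.id ∥ₖ η := by
  ext z : 1
  rw [liftSnd, prod_apply, parallelComp_apply, prodMkLeft_apply, deterministic_apply,
    id_apply]

lemma isSFiniteKernel_compList {X : Type*} [MeasurableSpace X] {ks : List (Kernel X X)}
    (hks : ∀ k ∈ ks, IsSFiniteKernel k) : IsSFiniteKernel (compList ks) := by
  induction ks with
  | nil => rw [compList]; infer_instance
  | cons k ks ih =>
    have := hks k List.mem_cons_self
    have := ih fun k' hk' => hks k' (List.mem_cons_of_mem k hk')
    rw [compList]; infer_instance

theorem compList_eq_parallelComp_of_isInterleaving {κs : List (Kernel E E)}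
    {ηs : List (Kernel F F)} {cs : List (Kernel (E × F) (E × F))}
    (hκ : ∀ κ ∈ κs, IsSFiniteKernel κ) (hη : ∀ η ∈ ηs, IsSFiniteKernel η)
    (hcs : IsInterleaving (κs.map liftFst) (ηs.map liftSnd) cs) :
    compList cs = compList κs ∥ₖ compList ηs := by
  generalize has : κs.map (liftFst (F := F)) = as at hcs
  generalize hbs : ηs.map (liftSnd (E := E)) = bs at hcs
  induction hcs generalizing κs ηs with
  | nil =>
    obtain rfl := List.map_eq_nil_iff.mp has
    obtain rfl := List.map_eq_nil_iff.mp hbs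
    simp only [compList, id_parallelComp_id]
  | left _ ih =>
    obtain ⟨κ, κs, rfl, rfl, rfl⟩ := List.map_eq_cons_iff.mp has
    have := hκ κ List.mem_cons_self
    have hκ_tail := fun κ' hκ' => hκ κ' (List.mem_cons_of_mem κ hκ')
    have := isSFiniteKernel_compList hκ_tail
    have := isSFiniteKernel_compList hη
    rw [compList, ih hκ_tail hη rfl hbs, liftFst_eq_parallelComp_id,
      parallelComp_comp_parallelComp, comp_id, compList]
  | right _ ih =>
    obtain ⟨η, ηs, rfl, rfl, rfl⟩ := List.map_eq_cons_iff.mp hbs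
    have := hη η List.mem_cons_self
    have hη_tail := fun η' hη' => hη η' (List.mem_cons_of_mem η hη')
    have := isSFiniteKernel_compList hκ
    have := isSFiniteKernel_compList hη_tail
    rw [compList, ih hκ hη_tail has rfl, liftSnd_eq_id_parallelComp,
      parallelComp_comp_parallelComp, comp_id, compList]

end

/-- **Equivalence of monotonic traversal strategies (Theorem C.1, kernel level).**
Given Markov kernels `κ_1, …, κ_m` on `E` and `η_1, …, η_k` on `F`, lifted to `E × F`
so that each `κ_i` acts only on the first coordinate and each `η_j` only on the second,
the composition of the lifted kernels along *any* interleaving of the two sequences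
(preserving each sequence's internal order) is the same kernel on `E × F`, namely
`(x, y) ↦ (κ_m ∘ ⋯ ∘ κ_1)(x) ⊗ (η_k ∘ ⋯ ∘ η_1)(y)`. In particular, the joint law of
the endpoints depends only on the total amount of noising applied to each coordinate,
not on the order of interleaving. -/
theorem interleaved_coordinatewise_composition_eq
    {E F : Type*} [MeasurableSpace E] [MeasurableSpace F]
    (κs : List (Kernel E E)) (ηs : List (Kernel F F))
    (hκ : ∀ κ ∈ κs, IsMarkovKernel κ) (hη : ∀ η ∈ ηs, IsMarkovKernel η)
    (cs : List (Kernel (E × F) (E × F)))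
    (hcs : IsInterleaving (κs.map liftFst) (ηs.map liftSnd) cs) :
    ∀ z : E × F,
      compList cs z = ((compList κs) z.1).prod ((compList ηs) z.2) := by
  have hκ' : ∀ κ ∈ κs, IsSFiniteKernel κ := fun κ h =>
    have := hκ κ h; inferInstance
  have hη' : ∀ η ∈ ηs, IsSFiniteKernel η := fun η h =>
    have := hη η h; inferInstance
  have := isSFiniteKernel_compList hκ'
  have := isSFiniteKernel_compList hη'
  intro z
  rw [compList_eq_parallelComp_of_isInterleaving hκ' hη' hcs, Kernel.parallelComp_apply]
end
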